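/- Let p(x, z, u, t, e | u′, w) be a family of probability distributions over tuples (x, z, u, t, e) with values in finite sets, indexed by inputs u′ (ranging over the same set as u) and w, satisfying: (A1) Σ_{x,z} p(x, z, u, t, e | u′, w) = p(u, t, e) independently of (u′, w); (A2) p(x, z | u′, w, u, t, e) = p(x, z | u′, w) whenever defined; and no-signaling to Eve: Σ_x p(x, z | u′, w) depends only on (z, w). Define p_w(x, z, u, t, e) := p(x, z, u, t, e | u′ = u, w). Then for every w: p_w(u | z) = p(u) for every z with p_w(z) > 0, and p_w(t | z, u, e) = p(t | u, e) whenever both sides are defined. In particular, if p(u, t, e) satisfies the ε-SV condition, then p_w(u | z) and p_w(t | z, u, e) also satisfy the ε-SV bounds. -/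

import Mathlib

open Classical

noncomputable section

/-- Strings of four bits. -/
abbrev Bits4 := Fin 4 → Bool

/-- Generic (unnormalized) Santha-Vazirani condition: for a weight `μ` on a finite type
`α` whose elements have bits `bits a i` indexed by a finite type `ι` with a strict
order `lt`, every bit is `ε`-unbiased conditioned on all earlier bits. -/
def SVcond (ε : ℝ) {α ι : Type} [Fintype α] [Fintype ι]
    (lt : ι → ι → Prop) (bits : α → ι → Bool) (μ : α → ℝ) : Prop :=
  ∀ (j : ι) (v : ι → Bool) (b : Bool),
    ((1 / 2 - ε) * (∑ a ∈ Finset.univ.filter (fun a => ∀ i, lt i j → bits a i = v i), μ a)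
        ≤ ∑ a ∈ Finset.univ.filter
            (fun a => (∀ i, lt i j → bits a i = v i) ∧ bits a j = b), μ a)
    ∧ (∑ a ∈ Finset.univ.filter
          (fun a => (∀ i, lt i j → bits a i = v i) ∧ bits a j = b), μ a
        ≤ (1 / 2 + ε) * ∑ a ∈ Finset.univ.filter (fun a => ∀ i, lt i j → bits a i = v i), μ a)

/-- Lexicographic order on the bit positions of a setting string in `Fin n → Bits4`. -/
def lexLT4 {n : ℕ} (p q : Fin n × Fin 4) : Prop :=
  p.1 < q.1 ∨ (p.1 = q.1 ∧ p.2 < q.2)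

/-- Bit positions of the joint SV variable `(e, u, t)` (Eve's part first, as in the
paper, then the input bits `u`, then the extra bits `t`). -/
abbrev SVidx (n nt ne : ℕ) : Type := Fin ne ⊕ ((Fin n × Fin 4) ⊕ Fin nt)

/-- Position of a bit of `(e, u, t)` in the SV order. -/
def svPos {n nt ne : ℕ} : SVidx n nt ne → ℕ
  | Sum.inl k => (k : ℕ)
  | Sum.inr (Sum.inl p) => ne + 4 * (p.1 : ℕ) + (p.2 : ℕ)
  | Sum.inr (Sum.inr k) => ne + 4 * n + (k : ℕ)

/-- Order on bit positions of `(e, u, t)`. -/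
def svLT {n nt ne : ℕ} (i j : SVidx n nt ne) : Prop := svPos i < svPos j

/-- The bits of the value `(u, t, e)`. -/
def svBits {n nt ne : ℕ}
    (a : (Fin n → Bits4) × (Fin nt → Bool) × (Fin ne → Bool)) :
    SVidx n nt ne → Bool
  | Sum.inl k => a.2.2 k
  | Sum.inr (Sum.inl p) => a.1 p.1 p.2
  | Sum.inr (Sum.inr k) => a.2.1 k

/-!
By A1 and A2, `(x, z)` and `(u, t, e)` are independent under every `p(·|u', w)` and the law
`p(u, t, e)` of the latter does not depend on the inputs, so
`p(x, z, u, t, e|u', w) = p(x, z|u', w) p(u, t, e)`. No-signalling to Eve makes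
`r(w, z) := Σₓ p(x, z|u', w)` independent of `u'`, hence summing out `x` gives
`p_w(z, u, t, e) = r(w, z) p(u, t, e)` even though the input `u'` is tied to `u`: under `p_w`,
`z` is independent of `(u, t, e)`. Both conditional identities follow, and the SV bounds,
being homogeneous in the weights, pass from `p(u, t, e)` to `r(w, z) p(u)` and to
`r(w, z) p(u, t, e)` as a function of `t`.
-/

def SVBounds (ε A B : ℝ) : Prop :=
  (1 / 2 - ε) * A ≤ B ∧ B ≤ (1 / 2 + ε) * A

theorem SVBounds.mul_left {ε A B r : ℝ} (hr : 0 ≤ r) (h : SVBounds ε A B) :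
    SVBounds ε (r * A) (r * B) :=
  ⟨by nlinarith [h.1], by nlinarith [h.2]⟩

theorem SVBounds.sum {ε : ℝ} {κ : Type} {s : Finset κ} {A B : κ → ℝ}
    (h : ∀ k ∈ s, SVBounds ε (A k) (B k)) : SVBounds ε (∑ k ∈ s, A k) (∑ k ∈ s, B k) := by
  rw [SVBounds, Finset.mul_sum, Finset.mul_sum]
  exact ⟨Finset.sum_le_sum fun k hk => (h k hk).1, Finset.sum_le_sum fun k hk => (h k hk).2⟩

theorem SVcond.const_mul {ε r : ℝ} {α ι : Type} [Fintype α] [Fintype ι] {lt : ι → ι → Prop}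
    {bits : α → ι → Bool} {μ : α → ℝ} (hr : 0 ≤ r) (h : SVcond ε lt bits μ) :
    SVcond ε lt bits (fun a => r * μ a) := fun j v b => by
  simpa only [SVBounds, ← Finset.mul_sum] using SVBounds.mul_left hr (h j v b)

section Marginals

open Finset

variable {U T E M : Type} [Fintype U] [Fintype T] [Fintype E] [AddCommMonoid M]

theorem sum_filter_fst_and_snd_snd_eq (P : U → Prop) [DecidablePred P] (f : U → T → E → M)
    (e₀ : E) :
    ∑ a ∈ univ.filter (fun a : U × T × E => P a.1 ∧ a.2.2 = e₀), f a.1 a.2.1 a.2.2 =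
      ∑ u ∈ univ.filter P, ∑ t, f u t e₀ := by
  simp [sum_filter, Fintype.sum_prod_type, ite_and]

theorem sum_filter_fst_eq_and_snd_snd_eq (u : U) (e : E) (R : T → Prop) [DecidablePred R]
    (f : U → T → E → M) :
    ∑ a ∈ univ.filter (fun a : U × T × E => a.1 = u ∧ a.2.2 = e ∧ R a.2.1), f a.1 a.2.1 a.2.2 =
      ∑ t ∈ univ.filter R, f u t e := by
  simp [sum_filter, Fintype.sum_prod_type, ite_and]

end Marginals

section SVOrder

variable {n nt ne : ℕ}

@[simp] theorem svLT_inl_inr (k : Fin ne) (i : (Fin n × Fin 4) ⊕ Fin nt) :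
    svLT (Sum.inl k : SVidx n nt ne) (Sum.inr i) := by
  rcases i with p | k' <;> simp only [svLT, svPos] <;> omega

@[simp] theorem svLT_inr_inl_iff (p q : Fin n × Fin 4) :
    svLT (Sum.inr (Sum.inl p) : SVidx n nt ne) (Sum.inr (Sum.inl q)) ↔ lexLT4 p q := by
  obtain ⟨⟨p₁, hp₁⟩, ⟨p₂, hp₂⟩⟩ := p
  obtain ⟨⟨q₁, hq₁⟩, ⟨q₂, hq₂⟩⟩ := q
  simp only [svLT, svPos, lexLT4, Fin.lt_def, Fin.mk.injEq]
  omega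

@[simp] theorem not_svLT_inr_inr_inr_inl (k : Fin nt) (q : Fin n × Fin 4) :
    ¬ svLT (Sum.inr (Sum.inr k) : SVidx n nt ne) (Sum.inr (Sum.inl q)) := by
  simp only [svLT, svPos]; omega

@[simp] theorem svLT_inr_inl_inr_inr (p : Fin n × Fin 4) (k : Fin nt) :
    svLT (Sum.inr (Sum.inl p) : SVidx n nt ne) (Sum.inr (Sum.inr k)) := by
  simp only [svLT, svPos]; omega

@[simp] theorem svLT_inr_inr_iff (k k' : Fin nt) :
    svLT (Sum.inr (Sum.inr k) : SVidx n nt ne) (Sum.inr (Sum.inr k')) ↔ k < k' := by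
  simp only [svLT, svPos, Fin.lt_def]; omega

theorem svBits_inr_inl (a : (Fin n → Bits4) × (Fin nt → Bool) × (Fin ne → Bool))
    (p : Fin n × Fin 4) : svBits a (Sum.inr (Sum.inl p)) = a.1 p.1 p.2 := rfl

theorem svBits_inr_inr (a : (Fin n → Bits4) × (Fin nt → Bool) × (Fin ne → Bool))
    (k : Fin nt) : svBits a (Sum.inr (Sum.inr k)) = a.2.1 k := rfl

theorem svPrefix_inputs_iff (j : Fin n × Fin 4) (e₀ : Fin ne → Bool)
    (v : Fin n × Fin 4 → Bool) (g : Fin nt → Bool)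
    (a : (Fin n → Bits4) × (Fin nt → Bool) × (Fin ne → Bool)) :
    (∀ i, svLT i (Sum.inr (Sum.inl j)) → svBits a i = Sum.elim e₀ (Sum.elim v g) i) ↔
      (∀ p, lexLT4 p j → a.1 p.1 p.2 = v p) ∧ a.2.2 = e₀ := by
  simp [Sum.forall, svBits, funext_iff, and_comm]

theorem svPrefix_extra_iff (j : Fin nt) (u : Fin n → Bits4) (e : Fin ne → Bool)
    (v : Fin nt → Bool) (a : (Fin n → Bits4) × (Fin nt → Bool) × (Fin ne → Bool)) :
    (∀ i, svLT i (Sum.inr (Sum.inr j)) →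
        svBits a i = Sum.elim e (Sum.elim (fun p => u p.1 p.2) v) i) ↔
      (a.1 = u ∧ a.2.2 = e ∧ ∀ k, k < j → a.2.1 k = v k) := by
  simp [Sum.forall, svBits, funext_iff, and_comm, and_assoc]

variable {ε : ℝ} {M : (Fin n → Bits4) → (Fin nt → Bool) → (Fin ne → Bool) → ℝ}

open Finset in
/-- Eve's bits `e` precede `u` in the SV order: condition on each value of `e` and sum. -/
theorem SVcond.marginal_inputs (h : SVcond ε svLT svBits (fun a => M a.1 a.2.1 a.2.2)) :
    SVcond ε lexLT4 (fun (u : Fin n → Bits4) (q : Fin n × Fin 4) => u q.1 q.2)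
      (fun u => ∑ t, ∑ e, M u t e) := by
  intro j v b
  have hfiber : ∀ e₀ : Fin ne → Bool, SVBounds ε
      (∑ u ∈ univ.filter (fun u : Fin n → Bits4 => ∀ p, lexLT4 p j → u p.1 p.2 = v p),
        ∑ t, M u t e₀)
      (∑ u ∈ univ.filter (fun u : Fin n → Bits4 =>
        (∀ p, lexLT4 p j → u p.1 p.2 = v p) ∧ u j.1 j.2 = b), ∑ t, M u t e₀) := by
    intro e₀
    have := h (Sum.inr (Sum.inl j)) (Sum.elim e₀ (Sum.elim v fun _ => false)) b
    simp only [svPrefix_inputs_iff, svBits_inr_inl, and_right_comm] at this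
    rw [SVBounds, ← sum_filter_fst_and_snd_snd_eq, ← sum_filter_fst_and_snd_snd_eq]
    convert this
  have hswap : ∀ s : Finset (Fin n → Bits4),
      ∑ e₀, ∑ u ∈ s, ∑ t, M u t e₀ = ∑ u ∈ s, ∑ t, ∑ e, M u t e := fun s => by
    rw [sum_comm]
    exact sum_congr rfl fun u _ => sum_comm
  simpa only [SVBounds, hswap] using SVBounds.sum (s := univ) fun e₀ _ => hfiber e₀

theorem SVcond.conditional_extra (u : Fin n → Bits4) (e : Fin ne → Bool)
    (h : SVcond ε svLT svBits (fun a => M a.1 a.2.1 a.2.2)) :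
    SVcond ε (fun (i j : Fin nt) => i < j) (fun (t : Fin nt → Bool) (k : Fin nt) => t k)
      (fun t => M u t e) := by
  intro j v b
  have := h (Sum.inr (Sum.inr j)) (Sum.elim e (Sum.elim (fun p => u p.1 p.2) v)) b
  simp only [svPrefix_extra_iff, svBits_inr_inr, and_assoc] at this
  beta_reduce
  rw [← sum_filter_fst_eq_and_snd_snd_eq, ← sum_filter_fst_eq_and_snd_snd_eq]
  convert this

end SVOrder

theorem eq_mul_sum_of_div_sum_eq {A : Type} [Fintype A] {f q : A → ℝ} (hf : ∀ a, 0 ≤ f a)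
    (h : 0 < ∑ a, f a → ∀ a, f a / ∑ a', f a' = q a) (a : A) : f a = q a * ∑ a', f a' := by
  rcases (Finset.sum_nonneg fun a _ => hf a).lt_or_eq with hpos | hzero
  · rw [← h hpos a, div_mul_cancel₀ _ hpos.ne']
  · rw [← hzero, mul_zero]
    exact (Finset.sum_eq_zero_iff_of_nonneg fun a _ => hf a).1 hzero.symm a (Finset.mem_univ a)

theorem eq_mul_of_cond_eq_marginal {X Z W U T E : Type} [Fintype X] [Fintype Z] [Fintype U]
    [Fintype T] [Fintype E] {p : U → W → X → Z → U → T → E → ℝ}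
    (hp0 : ∀ u' w x z u t e, 0 ≤ p u' w x z u t e)
    (hA1 : ∀ u'₁ w₁ u'₂ w₂ u t e,
      (∑ x, ∑ z, p u'₁ w₁ x z u t e) = (∑ x, ∑ z, p u'₂ w₂ x z u t e))
    (hA2 : ∀ u' w x z u t e,
      0 < (∑ x', ∑ z', p u' w x' z' u t e) →
      p u' w x z u t e / (∑ x', ∑ z', p u' w x' z' u t e)
        = ∑ u₂, ∑ t₂, ∑ e₂, p u' w x z u₂ t₂ e₂)
    (c₀ : U) (w₀ : W) (u' : U) (w : W) (x : X) (z : Z) (u : U) (t : T) (e : E) :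
    p u' w x z u t e =
      (∑ u₂, ∑ t₂, ∑ e₂, p u' w x z u₂ t₂ e₂) * ∑ x', ∑ z', p c₀ w₀ x' z' u t e := by
  rw [← hA1 u' w c₀ w₀ u t e]
  have := eq_mul_sum_of_div_sum_eq (f := fun xz : X × Z => p u' w xz.1 xz.2 u t e)
    (q := fun xz => ∑ u₂, ∑ t₂, ∑ e₂, p u' w xz.1 xz.2 u₂ t₂ e₂) (fun _ => hp0 _ _ _ _ _ _ _)
    (fun hpos xz => by rw [Fintype.sum_prod_type] at hpos ⊢; exact hA2 _ _ _ _ _ _ _ hpos) (x, z)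
  simpa only [Fintype.sum_prod_type] using this

theorem stmt_15_general {X Z W : Type} [Fintype X] [Fintype Z] [Fintype W]
    (n nt ne : ℕ) (ε : ℝ)
    (p : (Fin n → Bits4) → W → X → Z → (Fin n → Bits4) → (Fin nt → Bool) →
          (Fin ne → Bool) → ℝ)
    (hp0 : ∀ u' w x z u t e, 0 ≤ p u' w x z u t e)
    (hp1 : ∀ u' w, ∑ x, ∑ z, ∑ u, ∑ t, ∑ e, p u' w x z u t e = 1)
    -- A1: the distribution of (u,t,e) is independent of the inputs (u',w)
    (hA1 : ∀ u'₁ w₁ u'₂ w₂ u t e,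
      (∑ x, ∑ z, p u'₁ w₁ x z u t e) = (∑ x, ∑ z, p u'₂ w₂ x z u t e))
    -- A2: p(x,z | u',w,u,t,e) = p(x,z | u',w) whenever defined
    (hA2 : ∀ u' w x z u t e,
      0 < (∑ x', ∑ z', p u' w x' z' u t e) →
      p u' w x z u t e / (∑ x', ∑ z', p u' w x' z' u t e)
        = ∑ u₂, ∑ t₂, ∑ e₂, p u' w x z u₂ t₂ e₂)
    -- no-signaling to Eve: Σ_x p(x,z|u',w) depends only on (z,w)
    (hNSE : ∀ u'₁ u'₂ w z,
      (∑ x, ∑ u, ∑ t, ∑ e, p u'₁ w x z u t e) = (∑ x, ∑ u, ∑ t, ∑ e, p u'₂ w x z u t e))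
    -- reference input fixing the marginal `p(u,t,e)` (by A1 the choice is irrelevant)
    (c₀ : Fin n → Bits4) (w₀ : W) :
    -- (a) p_w(u|z) = p(u)
    (∀ w z, 0 < (∑ x, ∑ u', ∑ t, ∑ e, p u' w x z u' t e) →
      ∀ u, (∑ x, ∑ t, ∑ e, p u w x z u t e) / (∑ x, ∑ u', ∑ t, ∑ e, p u' w x z u' t e)
          = ∑ x, ∑ z', ∑ t, ∑ e, p c₀ w₀ x z' u t e)
    -- (b) p_w(t|z,u,e) = p(t|u,e)
    ∧ (∀ w z u e t,
        0 < (∑ x, ∑ t', p u w x z u t' e) →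
        0 < (∑ x, ∑ z', ∑ t', p c₀ w₀ x z' u t' e) →
        (∑ x, p u w x z u t e) / (∑ x, ∑ t', p u w x z u t' e)
          = (∑ x, ∑ z', p c₀ w₀ x z' u t e) / (∑ x, ∑ z', ∑ t', p c₀ w₀ x z' u t' e))
    -- (c) in particular: the SV condition is inherited
    ∧ (SVcond ε svLT svBits
          (fun a : (Fin n → Bits4) × (Fin nt → Bool) × (Fin ne → Bool) =>
            ∑ x, ∑ z, p c₀ w₀ x z a.1 a.2.1 a.2.2) →
        (∀ w z, SVcond ε lexLT4 (fun (u : Fin n → Bits4) (q : Fin n × Fin 4) => u q.1 q.2)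
            (fun u => ∑ x, ∑ t, ∑ e, p u w x z u t e))
        ∧ (∀ w z u e, SVcond ε (fun (i j : Fin nt) => i < j)
            (fun (t : Fin nt → Bool) (k : Fin nt) => t k)
            (fun t => ∑ x, p u w x z u t e))) := by
  set M : (Fin n → Bits4) → (Fin nt → Bool) → (Fin ne → Bool) → ℝ :=
    fun u t e => ∑ x, ∑ z, p c₀ w₀ x z u t e
  set q : (Fin n → Bits4) → W → X → Z → ℝ :=
    fun u' w x z => ∑ u, ∑ t, ∑ e, p u' w x z u t e
  set r : W → Z → ℝ := fun w z => ∑ x, q c₀ w x z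
  have hfact : ∀ u' w x z u t e, p u' w x z u t e = q u' w x z * M u t e :=
    eq_mul_of_cond_eq_marginal hp0 hA1 hA2 c₀ w₀
  have hq1 : ∀ u' w, ∑ x, ∑ z, q u' w x z = 1 := hp1
  have hNS : ∀ u' w z, ∑ x, q u' w x z = r w z := fun u' w z => hNSE u' c₀ w z
  have hr0 : ∀ w z, 0 ≤ r w z := fun w z => Finset.sum_nonneg fun x _ =>
    Finset.sum_nonneg fun u _ => Finset.sum_nonneg fun t _ => Finset.sum_nonneg fun e _ => hp0 ..
  have hM1 : ∑ u, ∑ t, ∑ e, M u t e = 1 := by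
    simpa only [hfact, ← Finset.mul_sum, ← Finset.sum_mul, hq1, one_mul] using hp1 c₀ w₀
  -- bring `∑ x` inside `∑ u'` in the denominator of (a), so that `hNS` applies
  simp_rw [Finset.sum_comm (γ := X) (α := Fin n → Bits4)]
  simp only [hfact, ← Finset.mul_sum, ← Finset.sum_mul, hNS, hq1, one_mul, hM1, mul_one]
  refine ⟨fun w z hpos u => ?_, fun w z u e t h₁ _ => ?_,
    fun hSV => ⟨fun w z => ?_, fun w z u e => ?_⟩⟩
  · exact mul_div_cancel_left₀ _ hpos.ne'
  · exact mul_div_mul_left _ _ (left_ne_zero_of_mul h₁.ne')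
  · exact (SVcond.marginal_inputs hSV).const_mul (hr0 w z)
  · exact (SVcond.conditional_extra u e hSV).const_mul (hr0 w z)

/-- for a family `p(x,z,u,t,e|u',w)` satisfying A1, A2 and no-signaling
to Eve, setting `p_w := p(·|u' = u, w)`, one has `p_w(u|z) = p(u)` and
`p_w(t|z,u,e) = p(t|u,e)` whenever defined; in particular if `p(u,t,e)` is an ε-SV
source, then `p_w(u|z)` and `p_w(t|z,u,e)` satisfy the ε-SV bounds. -/
theorem stmt_15 {X Z W : Type} [Fintype X] [Fintype Z] [Fintype W]
    (n nt ne : ℕ) (ε : ℝ) (hε0 : 0 ≤ ε) (hε : ε < 1 / 2)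
    (p : (Fin n → Bits4) → W → X → Z → (Fin n → Bits4) → (Fin nt → Bool) →
          (Fin ne → Bool) → ℝ)
    (hp0 : ∀ u' w x z u t e, 0 ≤ p u' w x z u t e)
    (hp1 : ∀ u' w, ∑ x, ∑ z, ∑ u, ∑ t, ∑ e, p u' w x z u t e = 1)
    -- A1: the distribution of (u,t,e) is independent of the inputs (u',w)
    (hA1 : ∀ u'₁ w₁ u'₂ w₂ u t e,
      (∑ x, ∑ z, p u'₁ w₁ x z u t e) = (∑ x, ∑ z, p u'₂ w₂ x z u t e))
    -- A2: p(x,z | u',w,u,t,e) = p(x,z | u',w) whenever defined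
    (hA2 : ∀ u' w x z u t e,
      0 < (∑ x', ∑ z', p u' w x' z' u t e) →
      p u' w x z u t e / (∑ x', ∑ z', p u' w x' z' u t e)
        = ∑ u₂, ∑ t₂, ∑ e₂, p u' w x z u₂ t₂ e₂)
    -- no-signaling to Eve: Σ_x p(x,z|u',w) depends only on (z,w)
    (hNSE : ∀ u'₁ u'₂ w z,
      (∑ x, ∑ u, ∑ t, ∑ e, p u'₁ w x z u t e) = (∑ x, ∑ u, ∑ t, ∑ e, p u'₂ w x z u t e))
    -- reference input fixing the marginal `p(u,t,e)` (by A1 the choice is irrelevant)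
    (c₀ : Fin n → Bits4) (w₀ : W) :
    -- (a) p_w(u|z) = p(u)
    (∀ w z, 0 < (∑ x, ∑ u', ∑ t, ∑ e, p u' w x z u' t e) →
      ∀ u, (∑ x, ∑ t, ∑ e, p u w x z u t e) / (∑ x, ∑ u', ∑ t, ∑ e, p u' w x z u' t e)
          = ∑ x, ∑ z', ∑ t, ∑ e, p c₀ w₀ x z' u t e)
    -- (b) p_w(t|z,u,e) = p(t|u,e)
    ∧ (∀ w z u e t,
        0 < (∑ x, ∑ t', p u w x z u t' e) →
        0 < (∑ x, ∑ z', ∑ t', p c₀ w₀ x z' u t' e) →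
        (∑ x, p u w x z u t e) / (∑ x, ∑ t', p u w x z u t' e)
          = (∑ x, ∑ z', p c₀ w₀ x z' u t e) / (∑ x, ∑ z', ∑ t', p c₀ w₀ x z' u t' e))
    -- (c) in particular: the SV condition is inherited
    ∧ (SVcond ε svLT svBits
          (fun a : (Fin n → Bits4) × (Fin nt → Bool) × (Fin ne → Bool) =>
            ∑ x, ∑ z, p c₀ w₀ x z a.1 a.2.1 a.2.2) →
        (∀ w z, SVcond ε lexLT4 (fun (u : Fin n → Bits4) (q : Fin n × Fin 4) => u q.1 q.2)
            (fun u => ∑ x, ∑ t, ∑ e, p u w x z u t e))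
        ∧ (∀ w z u e, SVcond ε (fun (i j : Fin nt) => i < j)
            (fun (t : Fin nt → Bool) (k : Fin nt) => t k)
            (fun t => ∑ x, p u w x z u t e))) :=
  stmt_15_general n nt ne ε p hp0 hp1 hA1 hA2 hNSE c₀ w₀

end
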